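/- Let H be a real Hilbert space, T : H → H with a nonempty fixed point set, β ∈ (0,1) such that ‖Ty − x*‖² ≤ ‖y − x*‖² − ((1−β)/β)‖y − Ty‖² for all y ∈ H and fixed points x*. Let 0 < ρ < 1/β, θ ∈ [0, min{1/2, (1−βρ)/(1+βρ)}), and δ ≤ 0 satisfy Condition: max{−(1−βρ−θ−βθρ)/(1−βρ), (βρθ(1+θ)−(1−βρ)(1−θ)²)/(1+θ)} < δ and βρθ(1+θ)−(1−βρ)(1−θ)² < (2θ−βρ+2)δ + (1−2βρ)δ². Then the sequence defined by y_n = x_n + θ(x_n − x_{n−1}) + δ(x_{n−1} − x_{n−2}), x_{n+1} = (1−ρ)y_n + ρTy_n is bounded and ‖x_{n+1} − x_n‖ → 0. -/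

import Mathlib

/-!
With `κ = (1 - βρ)/(βρ)`, the averagedness inequality says that the relaxed step
`x_{n+1} = (1-ρ) y_n + ρ T y_n` satisfies `‖x_{n+1} - p‖² ≤ ‖y_n - p‖² - κ ‖x_{n+1} - y_n‖²`
for every fixed point `p`. Expanding `y_n` in this inequality shows that the energy
`‖x_n - p‖² - θ ‖x_{n-1} - p‖² - δ ‖x_{n-2} - p‖² + b ‖x_n - x_{n-1}‖² + c ‖x_{n-1} - x_{n-2}‖²`,
with suitable weights `b, c ≥ 0`, drops by at least `ε ‖x_{n+1} - x_n‖²` at each step, where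
`ε > 0` is exactly the second condition on `δ`. Since `δ ≤ 0` and `θ < 1`, the energy controls
`‖x_n - p‖²`, so the iterates are bounded, the energy is bounded below, and `∑ ‖x_{n+1} - x_n‖²`
converges.
-/

open Filter Topology RealInnerProductSpace

section

variable {H : Type*} [NormedAddCommGroup H]

lemma le_max_of_le_mul_add {r : ℕ → ℝ} {θ C : ℝ} (hθ₀ : 0 ≤ θ) (hθ₁ : θ < 1)
    (h : ∀ n, r (n + 1) ≤ θ * r n + C) (n : ℕ) : r n ≤ max (r 0) (C / (1 - θ)) := by
  induction n with
  | zero => exact le_max_left _ _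
  | succ n ih =>
    have hC : C ≤ (1 - θ) * max (r 0) (C / (1 - θ)) := by
      rw [← div_le_iff₀' (by linarith)]
      exact le_max_right _ _
    nlinarith [h n, mul_le_mul_of_nonneg_left ih hθ₀]

lemma summable_of_add_mul_le {G a : ℕ → ℝ} {ε m : ℝ} (hε : 0 < ε) (ha : ∀ n, 0 ≤ a n)
    (h : ∀ n, G (n + 1) + ε * a n ≤ G n) (hm : ∀ n, m ≤ G n) : Summable a := by
  have htel : ∀ N, ε * ∑ k ∈ Finset.range N, a k ≤ G 0 - G N := by
    intro N
    induction N with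
    | zero => simp
    | succ N ih =>
      rw [Finset.sum_range_succ, mul_add]
      linarith [h N]
  refine summable_of_sum_range_le (c := (G 0 - m) / ε) ha fun N => ?_
  rw [le_div_iff₀ hε]
  linarith [htel N, hm N]

lemma bounded_and_tendsto_of_energy_descent {x : ℕ → H} {p : H} {G : ℕ → ℝ} {θ ε : ℝ}
    (hθ₀ : 0 ≤ θ) (hθ₁ : θ < 1) (hε : 0 < ε)
    (hdesc : ∀ n, G (n + 1) + ε * ‖x (n + 3) - x (n + 2)‖ ^ 2 ≤ G n)
    (hlow : ∀ n, ‖x (n + 2) - p‖ ^ 2 - θ * ‖x (n + 1) - p‖ ^ 2 ≤ G n) :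
    (∃ M : ℝ, ∀ n, ‖x n‖ ≤ M) ∧ Tendsto (fun n => ‖x (n + 1) - x n‖) atTop (𝓝 0) := by
  have hG : Antitone G := antitone_nat_of_succ_le fun n => by
    nlinarith [hdesc n, mul_nonneg hε.le (sq_nonneg ‖x (n + 3) - x (n + 2)‖)]
  set R := max (‖x 1 - p‖ ^ 2) (G 0 / (1 - θ))
  have hR : ∀ n, ‖x (n + 1) - p‖ ^ 2 ≤ R :=
    le_max_of_le_mul_add (r := fun n => ‖x (n + 1) - p‖ ^ 2) hθ₀ hθ₁
      fun n => by linarith [hlow n, hG (Nat.zero_le n)]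
  constructor
  · have hR' : ∀ n, ‖x n - p‖ ^ 2 ≤ max (‖x 0 - p‖ ^ 2) R
      | 0 => le_max_left _ _
      | n + 1 => (hR n).trans (le_max_right _ _)
    refine ⟨√(max (‖x 0 - p‖ ^ 2) R) + ‖p‖, fun n => ?_⟩
    have hn : ‖x n - p‖ ≤ √(max (‖x 0 - p‖ ^ 2) R) := Real.le_sqrt_of_sq_le (hR' n)
    linarith [norm_le_norm_sub_add (x n) p]
  · have hsum : Summable fun n => ‖x (n + 3) - x (n + 2)‖ ^ 2 :=
      summable_of_add_mul_le hε (fun n => sq_nonneg _) hdesc (m := -(θ * R)) fun n => by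
        nlinarith [hlow n, mul_le_mul_of_nonneg_left (hR n) hθ₀, sq_nonneg ‖x (n + 2) - p‖]
    have hsq := hsum.tendsto_atTop_zero.sqrt
    simp only [Real.sqrt_sq (norm_nonneg _), Real.sqrt_zero] at hsq
    exact (tendsto_add_atTop_iff_nat 2).mp hsq

-- `energyWeightNew`, `energyWeightOld` and `energyDecay` are the `b`, `c` and `ε` of the header,
-- read off by matching coefficients in the expansion of `‖y_n - p‖²`.
section Energy

variable (κ θ δ : ℝ)

def energyWeightOld : ℝ := δ * (δ - θ) - κ * (δ ^ 2 + δ + θ * δ)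

def energyWeightNew : ℝ := (1 + θ) * (θ - δ) - κ * (θ ^ 2 - θ + θ * δ) + energyWeightOld κ θ δ

def energyDecay : ℝ := κ * (1 - θ + δ) - energyWeightNew κ θ δ

def inertialEnergy (p u₀ u₁ u₂ : H) : ℝ :=
  ‖u₂ - p‖ ^ 2 - θ * ‖u₁ - p‖ ^ 2 - δ * ‖u₀ - p‖ ^ 2
    + energyWeightNew κ θ δ * ‖u₂ - u₁‖ ^ 2 + energyWeightOld κ θ δ * ‖u₁ - u₀‖ ^ 2

end Energy

lemma energyWeightOld_nonneg {κ θ δ : ℝ} (hκ : 0 ≤ κ) (hθ : 0 ≤ θ) (hδ₀ : δ ≤ 0)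
    (hδ₁ : -1 ≤ δ) : 0 ≤ energyWeightOld κ θ δ := by
  unfold energyWeightOld
  nlinarith [mul_nonneg (neg_nonneg.mpr hδ₀) (sub_nonneg.mpr (hδ₀.trans hθ)),
    mul_nonneg (mul_nonneg (neg_nonneg.mpr hδ₀) hκ) (show 0 ≤ 1 + θ + δ by linarith)]

lemma energyWeightOld_le_energyWeightNew {κ θ δ : ℝ} (hκ : 0 ≤ κ) (hθ : 0 ≤ θ) (hδ : δ ≤ 0)
    (hθδ : θ + δ ≤ 1) : energyWeightOld κ θ δ ≤ energyWeightNew κ θ δ := by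
  unfold energyWeightNew
  nlinarith [mul_nonneg (show 0 ≤ 1 + θ by linarith) (sub_nonneg.mpr (hδ.trans hθ)),
    mul_nonneg (mul_nonneg hκ hθ) (show 0 ≤ 1 - θ - δ by linarith)]

lemma energyDecay_pos {a θ δ : ℝ} (ha : 0 < a)
    (h : a * θ * (1 + θ) - (1 - a) * (1 - θ) ^ 2 < (2 * θ - a + 2) * δ + (1 - 2 * a) * δ ^ 2) :
    0 < energyDecay ((1 - a) / a) θ δ := by
  have key : a * energyDecay ((1 - a) / a) θ δ = (2 * θ - a + 2) * δ + (1 - 2 * a) * δ ^ 2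
      - (a * θ * (1 + θ) - (1 - a) * (1 - θ) ^ 2) := by
    simp only [energyDecay, energyWeightNew, energyWeightOld]
    field_simp
    ring
  exact pos_of_mul_pos_right (key ▸ sub_pos.mpr h) ha.le

lemma inertialEnergy_lower_bound {κ θ δ : ℝ} (hδ : δ ≤ 0) (hnew : 0 ≤ energyWeightNew κ θ δ)
    (hold : 0 ≤ energyWeightOld κ θ δ) (p u₀ u₁ u₂ : H) :
    ‖u₂ - p‖ ^ 2 - θ * ‖u₁ - p‖ ^ 2 ≤ inertialEnergy κ θ δ p u₀ u₁ u₂ := by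
  unfold inertialEnergy
  have : 0 ≤ -δ * ‖u₀ - p‖ ^ 2 := mul_nonneg (by linarith) (sq_nonneg _)
  nlinarith [mul_nonneg hnew (sq_nonneg ‖u₂ - u₁‖), mul_nonneg hold (sq_nonneg ‖u₁ - u₀‖)]

variable [InnerProductSpace ℝ H]

lemma norm_relax_sub_sq_le {β ρ : ℝ} (hβ : 0 < β) (hρ : 0 < ρ) {y v p : H}
    (hv : ‖v - p‖ ^ 2 ≤ ‖y - p‖ ^ 2 - ((1 - β) / β) * ‖y - v‖ ^ 2) :
    ‖(1 - ρ) • y + ρ • v - p‖ ^ 2 ≤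
      ‖y - p‖ ^ 2 - ((1 - β * ρ) / (β * ρ)) * ‖(1 - ρ) • y + ρ • v - y‖ ^ 2 := by
  have hstep : (1 - ρ) • y + ρ • v - y = ρ • (v - y) := by module
  have hpt : (1 - ρ) • y + ρ • v - p = (y - p) + ρ • (v - y) := by module
  have hvp : v - p = (y - p) + (v - y) := by abel
  rw [hstep, hpt, norm_add_sq_real, inner_smul_right, norm_smul, Real.norm_of_nonneg hρ.le]
  rw [hvp, norm_add_sq_real, norm_sub_rev y v] at hv
  have hinner : 2 * ⟪y - p, v - y⟫ ≤ -(1 / β) * ‖v - y‖ ^ 2 := by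
    have : (1 - β) / β = 1 / β - 1 := by field_simp
    rw [this] at hv
    linarith
  have hcoef : (1 - β * ρ) / (β * ρ) * (ρ * ‖v - y‖) ^ 2 = ρ * (1 / β) * ‖v - y‖ ^ 2
      - ρ ^ 2 * ‖v - y‖ ^ 2 := by
    field_simp
  nlinarith

lemma inertialEnergy_descent_of_origin {κ θ δ : ℝ} (hκ : 0 ≤ κ) (hθ : 0 ≤ θ) (hδ : δ ≤ 0)
    {u₀ u₁ u₂ z : H}
    (hz : ‖z‖ ^ 2 ≤ ‖u₂ + θ • (u₂ - u₁) + δ • (u₁ - u₀)‖ ^ 2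
      - κ * ‖z - (u₂ + θ • (u₂ - u₁) + δ • (u₁ - u₀))‖ ^ 2) :
    inertialEnergy κ θ δ 0 u₁ u₂ z + energyDecay κ θ δ * ‖z - u₂‖ ^ 2 ≤
      inertialEnergy κ θ δ 0 u₀ u₁ u₂ := by
  -- the cross terms of `hz` are absorbed by these four squares
  have h₁ : 0 ≤ κ * θ * ‖(z - u₂) - (u₂ - u₁)‖ ^ 2 := by positivity
  have h₂ : 0 ≤ κ * (-δ) * ‖(z - u₂) + (u₁ - u₀)‖ ^ 2 :=
    mul_nonneg (mul_nonneg hκ (by linarith)) (sq_nonneg _)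
  have h₃ : 0 ≤ κ * (θ * (-δ)) * ‖(u₂ - u₁) - (u₁ - u₀)‖ ^ 2 :=
    mul_nonneg (mul_nonneg hκ (mul_nonneg hθ (by linarith))) (sq_nonneg _)
  have h₄ : 0 ≤ (1 + θ) * (-δ) * ‖(u₂ - u₁) + (u₁ - u₀)‖ ^ 2 :=
    mul_nonneg (mul_nonneg (by linarith) (by linarith)) (sq_nonneg _)
  simp only [inertialEnergy, energyDecay, energyWeightNew, energyWeightOld, sub_zero]
  simp only [← real_inner_self_eq_norm_sq, inner_add_left, inner_add_right, inner_sub_left,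
    inner_sub_right, real_inner_smul_left, real_inner_smul_right] at *
  simp only [real_inner_comm u₀ u₁, real_inner_comm u₀ u₂, real_inner_comm u₁ u₂,
    real_inner_comm u₀ z, real_inner_comm u₁ z, real_inner_comm u₂ z] at *
  linarith

lemma inertialEnergy_descent {κ θ δ : ℝ} (hκ : 0 ≤ κ) (hθ : 0 ≤ θ) (hδ : δ ≤ 0)
    {p u₀ u₁ u₂ z : H}
    (hz : ‖z - p‖ ^ 2 ≤ ‖u₂ + θ • (u₂ - u₁) + δ • (u₁ - u₀) - p‖ ^ 2
      - κ * ‖z - (u₂ + θ • (u₂ - u₁) + δ • (u₁ - u₀))‖ ^ 2) :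
    inertialEnergy κ θ δ p u₁ u₂ z + energyDecay κ θ δ * ‖z - u₂‖ ^ 2 ≤
      inertialEnergy κ θ δ p u₀ u₁ u₂ := by
  have hw : u₂ - p + θ • (u₂ - p - (u₁ - p)) + δ • (u₁ - p - (u₀ - p))
      = u₂ + θ • (u₂ - u₁) + δ • (u₁ - u₀) - p := by module
  have hzw : z - p - (u₂ + θ • (u₂ - u₁) + δ • (u₁ - u₀) - p)
      = z - (u₂ + θ • (u₂ - u₁) + δ • (u₁ - u₀)) := by abel
  have key := inertialEnergy_descent_of_origin (u₀ := u₀ - p) (u₁ := u₁ - p) (u₂ := u₂ - p)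
    (z := z - p) hκ hθ hδ (by rw [hw, hzw]; exact hz)
  simpa only [inertialEnergy, sub_zero, sub_sub_sub_cancel_right] using key

end

theorem stmt16_general {H : Type*} [NormedAddCommGroup H] [InnerProductSpace ℝ H]
    (T : H → H) (β ρ θ δ : ℝ) (hβ : β ∈ Set.Ioo (0 : ℝ) 1)
    (hfix : ∃ p : H, T p = p)
    (hT : ∀ (y xs : H), T xs = xs →
      ‖T y - xs‖ ^ 2 ≤ ‖y - xs‖ ^ 2 - ((1 - β) / β) * ‖y - T y‖ ^ 2)
    (hρ : 0 < ρ) (hρβ : ρ < 1 / β)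
    (hθ0 : 0 ≤ θ) (hθ : θ < min (1 / 2) ((1 - β * ρ) / (1 + β * ρ)))
    (hδ0 : δ ≤ 0)
    (hδ1 : max (-((1 - β * ρ - θ - β * θ * ρ) / (1 - β * ρ)))
      ((β * ρ * θ * (1 + θ) - (1 - β * ρ) * (1 - θ) ^ 2) / (1 + θ)) < δ)
    (hδ2 : β * ρ * θ * (1 + θ) - (1 - β * ρ) * (1 - θ) ^ 2 <
      (2 * θ - β * ρ + 2) * δ + (1 - 2 * β * ρ) * δ ^ 2)
    (x y : ℕ → H)
    (hy : ∀ n, y n = x (n + 2) + θ • (x (n + 2) - x (n + 1)) + δ • (x (n + 1) - x n))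
    (hx : ∀ n, x (n + 3) = (1 - ρ) • y n + ρ • T (y n)) :
    (∃ M : ℝ, ∀ n, ‖x n‖ ≤ M) ∧
    Tendsto (fun n => ‖x (n + 1) - x n‖) atTop (nhds 0) := by
  obtain ⟨p, hp⟩ := hfix
  have ha₀ : 0 < β * ρ := mul_pos hβ.1 hρ
  have ha₁ : β * ρ < 1 := by rwa [lt_div_iff₀' hβ.1] at hρβ
  have hκ : 0 ≤ (1 - β * ρ) / (β * ρ) := div_nonneg (by linarith) ha₀.le
  have hθ₁ : θ < 1 / 2 := hθ.trans_le (min_le_left _ _)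
  have hδ₁ : -1 < δ := by
    have : (1 - β * ρ - θ - β * θ * ρ) / (1 - β * ρ) ≤ 1 :=
      (div_le_one (by linarith)).2 (by nlinarith [mul_nonneg hθ0 ha₀.le])
    linarith [(le_max_left _ _).trans_lt hδ1]
  have hold := energyWeightOld_nonneg hκ hθ0 hδ0 hδ₁.le
  have hnew := hold.trans (energyWeightOld_le_energyWeightNew hκ hθ0 hδ0 (by linarith))
  refine bounded_and_tendsto_of_energy_descent
    (G := fun n => inertialEnergy ((1 - β * ρ) / (β * ρ)) θ δ p (x n) (x (n + 1)) (x (n + 2)))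
    hθ0 (by linarith) (energyDecay_pos (θ := θ) (δ := δ) ha₀ (by linarith)) (fun n => ?_)
    (fun n => inertialEnergy_lower_bound hδ0 hnew hold _ _ _ _)
  have hrelax := norm_relax_sub_sq_le hβ.1 hρ (hT (y n) p hp)
  rw [← hx n, hy n] at hrelax
  exact inertialEnergy_descent hκ hθ0 hδ0 hrelax

theorem stmt16 {H : Type*} [NormedAddCommGroup H] [InnerProductSpace ℝ H] [CompleteSpace H]
    (T : H → H) (β ρ θ δ : ℝ) (hβ : β ∈ Set.Ioo (0 : ℝ) 1)
    (hfix : ∃ p : H, T p = p)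
    (hT : ∀ (y xs : H), T xs = xs →
      ‖T y - xs‖ ^ 2 ≤ ‖y - xs‖ ^ 2 - ((1 - β) / β) * ‖y - T y‖ ^ 2)
    (hρ : 0 < ρ) (hρβ : ρ < 1 / β)
    (hθ0 : 0 ≤ θ) (hθ : θ < min (1 / 2) ((1 - β * ρ) / (1 + β * ρ)))
    (hδ0 : δ ≤ 0)
    (hδ1 : max (-((1 - β * ρ - θ - β * θ * ρ) / (1 - β * ρ)))
      ((β * ρ * θ * (1 + θ) - (1 - β * ρ) * (1 - θ) ^ 2) / (1 + θ)) < δ)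
    (hδ2 : β * ρ * θ * (1 + θ) - (1 - β * ρ) * (1 - θ) ^ 2 <
      (2 * θ - β * ρ + 2) * δ + (1 - 2 * β * ρ) * δ ^ 2)
    (x y : ℕ → H)
    (hy : ∀ n, y n = x (n + 2) + θ • (x (n + 2) - x (n + 1)) + δ • (x (n + 1) - x n))
    (hx : ∀ n, x (n + 3) = (1 - ρ) • y n + ρ • T (y n)) :
    (∃ M : ℝ, ∀ n, ‖x n‖ ≤ M) ∧
    Tendsto (fun n => ‖x (n + 1) - x n‖) atTop (nhds 0) :=
  stmt16_general T β ρ θ δ hβ hfix hT hρ hρβ hθ0 hθ hδ0 hδ1 hδ2 x y hy hx
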